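/- arXiv:2502.15019 — 8 statements merged into one kernel-verified Lean document; each statement's English description precedes it below -/
import Mathlib

section
/- For all N > 2, the clique covering number of the Johnson graph J(N,2) satisfies θ(J(N,2)) ≤ N − 2. Specifically, the collection {A_{{1}}^N, ..., A_{{N−3}}^N, B_{{N−2,N−1,N}}^N} is a clique cover of J(N,2) of size N−2. -/
/-- The Johnson graph `J(N, k)`. -/
def johnson (N k : ℕ) : SimpleGraph {S : Finset (Fin N) // S.card = k} where
  Adj S T := S ≠ T ∧ (S.1 ∩ T.1).card = k - 1
  symm := by
    constructor
    intro S T h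
    exact ⟨h.1.symm, by rw [Finset.inter_comm]; exact h.2⟩
  loopless := by
    constructor
    intro S h
    exact h.1 rfl

/-- The (vertex) clique covering number of a graph. -/
noncomputable def theta {V : Type*} (G : SimpleGraph V) : ℕ :=
  sInf {n | ∃ 𝒞 : Finset (Set V), 𝒞.card = n ∧ (∀ C ∈ 𝒞, G.IsClique C) ∧
    ∀ v, ∃ C ∈ 𝒞, v ∈ C}

/-- The type A clique `A_{{i}}^N` of `J(N, 2)`: all 2-sets containing `i`. -/
def coverA (N : ℕ) (i : Fin N) : Set {S : Finset (Fin N) // S.card = 2} :=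
  {T | i ∈ T.1}

/-- The type B clique `B_{{N-2, N-1, N}}^N` of `J(N, 2)`: all 2-subsets of the
three largest elements of `[N]` (indices `≥ N - 3` in `Fin N`). -/
def coverB (N : ℕ) : Set {S : Finset (Fin N) // S.card = 2} :=
  {T | ∀ x ∈ T.1, N - 3 ≤ (x : ℕ)}

/-- The collection `{A_{{1}}, …, A_{{N-3}}, B_{{N-2, N-1, N}}}`
(elements `1, …, N-3` correspond to indices `0, …, N-4` in `Fin N`). -/
def cover4 (N : ℕ) : Set (Set {S : Finset (Fin N) // S.card = 2}) :=
  (fun i => coverA N i) '' {i : Fin N | (i : ℕ) < N - 3} ∪ {coverB N}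

/-!
Two distinct 2-sets are adjacent in `J(N, 2)` exactly when they meet, so a family of pairwise
meeting 2-sets is a clique: the stars `A_{i}` meet in `i`, and any two 2-subsets of the
3-set `{N-2, N-1, N}` meet by pigeonhole. A 2-set avoiding `{1, …, N-3}` lies in that 3-set,
so these `N - 3` stars and one triangle cover all vertices.
-/

open Finset

lemma johnson_adj_of_pred_le_card_inter {N k : ℕ} {S T : {S : Finset (Fin N) // S.card = k}}
    (hne : S ≠ T) (h : k - 1 ≤ #(S.1 ∩ T.1)) : (johnson N k).Adj S T := by
  refine ⟨hne, ?_⟩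
  have hle : #(S.1 ∩ T.1) ≤ k := (card_le_card inter_subset_left).trans_eq S.2
  have hlt : #(S.1 ∩ T.1) ≠ k := fun heq => hne <| Subtype.ext <|
    (eq_of_subset_of_card_le inter_subset_left (by rw [S.2, heq])).symm.trans
      (eq_of_subset_of_card_le inter_subset_right (by rw [T.2, heq]))
  omega

lemma isClique_johnson_two_of_pairwise_inter_nonempty {N : ℕ}
    {s : Set {S : Finset (Fin N) // S.card = 2}}
    (h : s.Pairwise fun S T => (S.1 ∩ T.1).Nonempty) : (johnson N 2).IsClique s :=
  fun _ hS _ hT hne => johnson_adj_of_pred_le_card_inter hne (card_pos.2 (h hS hT hne))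

lemma isClique_coverA {N : ℕ} (i : Fin N) : (johnson N 2).IsClique (coverA N i) :=
  isClique_johnson_two_of_pairwise_inter_nonempty fun _ hS _ hT _ => ⟨i, mem_inter.2 ⟨hS, hT⟩⟩

lemma card_filter_le_val_le_three (N : ℕ) : #{x : Fin N | N - 3 ≤ (x : ℕ)} ≤ 3 :=
  calc #{x : Fin N | N - 3 ≤ (x : ℕ)}
      = #(({x : Fin N | N - 3 ≤ (x : ℕ)} : Finset (Fin N)).map Fin.valEmbedding) :=
        (card_map _).symm
    _ ≤ #(Ico (N - 3) N) := card_le_card fun x hx => by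
        obtain ⟨y, hy, rfl⟩ := mem_map.1 hx
        exact mem_Ico.2 ⟨(mem_filter.1 hy).2, y.2⟩
    _ ≤ 3 := by rw [Nat.card_Ico]; omega

lemma isClique_coverB (N : ℕ) : (johnson N 2).IsClique (coverB N) :=
  isClique_johnson_two_of_pairwise_inter_nonempty fun S hS T hT _ =>
    inter_nonempty_of_card_lt_card_add_card (s := {x : Fin N | N - 3 ≤ (x : ℕ)})
      (fun x hx => mem_filter.2 ⟨mem_univ x, hS x hx⟩)
      (fun x hx => mem_filter.2 ⟨mem_univ x, hT x hx⟩)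
      (by rw [S.2, T.2]; exact (card_filter_le_val_le_three N).trans_lt (by norm_num))

lemma isClique_of_mem_cover4 {N : ℕ} {C : Set {S : Finset (Fin N) // S.card = 2}}
    (hC : C ∈ cover4 N) : (johnson N 2).IsClique C := by
  rcases hC with ⟨i, -, rfl⟩ | rfl
  exacts [isClique_coverA i, isClique_coverB N]

lemma exists_mem_cover4 {N : ℕ} (T : {S : Finset (Fin N) // S.card = 2}) :
    ∃ C ∈ cover4 N, T ∈ C := by
  by_cases h : ∃ x ∈ T.1, (x : ℕ) < N - 3
  · obtain ⟨x, hxT, hx⟩ := h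
    exact ⟨coverA N x, Or.inl ⟨x, hx, rfl⟩, hxT⟩
  · push Not at h
    exact ⟨coverB N, Or.inr rfl, h⟩

def johnsonPair {N : ℕ} {a b : Fin N} (h : a ≠ b) : {S : Finset (Fin N) // S.card = 2} :=
  ⟨{a, b}, card_pair h⟩

lemma coverA_injective {N : ℕ} (hN : 2 < N) : Function.Injective (coverA N) := by
  intro i j hij
  by_contra hne
  obtain ⟨k, -, hk⟩ := exists_mem_notMem_of_card_lt_card (s := {i, j}) (t := univ)
    ((card_le_two (a := i) (b := j)).trans_lt (by simpa using hN))
  simp only [mem_insert, mem_singleton, not_or] at hk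
  have hmem : johnsonPair (Ne.symm hk.1) ∈ coverA N j := hij ▸ mem_insert_self i {k}
  simp only [coverA, johnsonPair, Set.mem_ofPred_eq, mem_insert, mem_singleton] at hmem
  rcases hmem with rfl | rfl
  exacts [hne rfl, hk.2 rfl]

lemma coverA_ne_coverB {N : ℕ} {i : Fin N} (hi : (i : ℕ) < N - 3) : coverA N i ≠ coverB N := by
  intro h
  obtain ⟨j, hj⟩ := @exists_ne _ (Fin.nontrivial_iff_two_le.2 (by omega)) i
  have hmem : johnsonPair hj.symm ∈ coverB N := h ▸ mem_insert_self i {j}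
  exact absurd (hmem i (mem_insert_self i {j})) (not_le.2 hi)

lemma ncard_cover4 {N : ℕ} (hN : 2 < N) : (cover4 N).ncard = N - 2 := by
  rw [cover4, Set.union_singleton, Set.ncard_insert_of_notMem,
    (coverA_injective hN).injOn.ncard_image]
  · rw [Set.ncard_eq_toFinset_card', Set.toFinset_ofPred, Fin.card_filter_val_lt]
    omega
  · rintro ⟨i, hi, h⟩
    exact coverA_ne_coverB hi h

lemma theta_le_ncard {V : Type*} {G : SimpleGraph V} {𝒞 : Set (Set V)} (hfin : 𝒞.Finite)
    (hclique : ∀ C ∈ 𝒞, G.IsClique C) (hcover : ∀ v, ∃ C ∈ 𝒞, v ∈ C) : theta G ≤ 𝒞.ncard :=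
  Nat.sInf_le ⟨hfin.toFinset, (Set.ncard_eq_toFinset_card 𝒞 hfin).symm,
    by simpa using hclique, by simpa using hcover⟩

/-- For `N > 2`, the collection `{A_{{1}}, …, A_{{N-3}}, B_{{N-2,N-1,N}}}` is a
clique cover of `J(N, 2)` of size `N - 2`; hence `θ(J(N, 2)) ≤ N - 2`. -/
theorem theta_johnson_two_le (N : ℕ) (hN : 2 < N) :
    (∀ C ∈ cover4 N, (johnson N 2).IsClique C) ∧
    (∀ v, ∃ C ∈ cover4 N, v ∈ C) ∧
    (cover4 N).ncard = N - 2 ∧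
    theta (johnson N 2) ≤ N - 2 := by
  have hclique : ∀ C ∈ cover4 N, (johnson N 2).IsClique C := fun _ => isClique_of_mem_cover4
  have hcover : ∀ v, ∃ C ∈ cover4 N, v ∈ C := exists_mem_cover4
  exact ⟨hclique, hcover, ncard_cover4 hN,
    ncard_cover4 hN ▸ theta_le_ncard (Set.toFinite _) hclique hcover⟩
end

section
/- For all N > 2, the clique covering number of J(N,2) satisfies θ(J(N,2)) ≥ N − 2. In particular, for any clique cover of J(N,2) consisting of n_A cliques of type A and n_B cliques of type B, with m = N − n_A, one has n_A + n_B ≥ N − m + ⌈binom(m,2)/3⌉ ≥ N − 2. -/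
/-! A clique of `J(N, 2)` whose members have no common point is contained in a triangle
`{xy, yb, xb}`, so it has at most three vertices. Pick a common point of each of the other
cliques of a cover and let `M` be the set of the `m` points not picked, so there are at least
`N - m` such cliques. A pair inside `M` contains no picked point, hence is covered by the
triangle cliques alone, and there are at least `⌈binom(m, 2) / 3⌉ ≥ m - 2` of them. -/

theorem Set.Intersecting.exists_card_le_three_forall_subset {α : Type*} [DecidableEq α]
    {𝒮 : Set (Finset α)} (h𝒮 : 𝒮.Intersecting) (h2 : ∀ S ∈ 𝒮, S.card = 2)
    (hno : ¬ ∃ x, ∀ S ∈ 𝒮, x ∈ S) : ∃ s : Finset α, s.card ≤ 3 ∧ ∀ S ∈ 𝒮, S ⊆ s := by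
  push Not at hno
  obtain rfl | ⟨S₀, hS₀⟩ := 𝒮.eq_empty_or_nonempty
  · exact ⟨∅, by simp, by simp⟩
  obtain ⟨x, y, -, rfl⟩ := Finset.card_eq_two.1 (h2 _ hS₀)
  obtain ⟨T, hT, hxT⟩ := hno x
  obtain ⟨U, hU, hyU⟩ := hno y
  refine ⟨insert x T, (Finset.card_insert_le _ _).trans (by rw [h2 T hT]), fun W hW => ?_⟩
  obtain ⟨t, t', -, rfl⟩ := Finset.card_eq_two.1 (h2 _ hT)
  obtain ⟨u, u', -, rfl⟩ := Finset.card_eq_two.1 (h2 _ hU)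
  obtain ⟨w, w', -, rfl⟩ := Finset.card_eq_two.1 (h2 _ hW)
  have hST := h𝒮 hS₀ hT
  have hSU := h𝒮 hS₀ hU
  have hTU := h𝒮 hT hU
  have hWS := h𝒮 hW hS₀
  have hWT := h𝒮 hW hT
  have hWU := h𝒮 hW hU
  simp only [Finset.disjoint_insert_left, Finset.disjoint_insert_right,
    Finset.disjoint_singleton, Finset.mem_insert, Finset.mem_singleton, Finset.insert_subset_iff,
    Finset.singleton_subset_iff] at hST hSU hTU hWS hWT hWU hxT hyU ⊢
  -- `T` contains `y` and `U` contains `x`; a point of `W` outside `insert x T` would force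
  -- the other point of `W` into `{x, y} ∩ T ∩ U = ∅`.
  grind

theorem Finset.exists_card_le_forall_exists {α β : Type*} [DecidableEq β] (s : Finset α)
    (r : α → β → Prop) (h : ∀ a ∈ s, ∃ b, r a b) :
    ∃ t : Finset β, t.card ≤ s.card ∧ ∀ a ∈ s, ∃ b ∈ t, r a b := by
  choose f hf using h
  exact ⟨s.attach.image fun a => f a.1 a.2, card_image_le.trans card_attach.le,
    fun a ha => ⟨f a ha, mem_image_of_mem _ (mem_attach _ ⟨a, ha⟩), hf a ha⟩⟩

theorem Nat.sub_two_le_choose_two_add_two_div_three (m : ℕ) : m - 2 ≤ (m.choose 2 + 2) / 3 := by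
  obtain _ | _ | k := m
  · simp
  · simp
  have h : (k + 2) * (k + 1) = (k + 2).choose 2 * 2 := by
    simpa using Nat.add_one_mul_choose_eq (k + 1) 1
  show k ≤ ((k + 2).choose 2 + 2) / 3
  rw [Nat.le_div_iff_mul_le three_pos]
  zify at h ⊢
  nlinarith [sq_nonneg ((k : ℤ) - 2)]

theorem le_theta {V : Type*} [Finite V] {G : SimpleGraph V} {n : ℕ}
    (h : ∀ 𝒞 : Finset (Set V), (∀ C ∈ 𝒞, G.IsClique C) → (∀ v, ∃ C ∈ 𝒞, v ∈ C) → n ≤ 𝒞.card) :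
    n ≤ theta G := by
  have := Fintype.ofFinite V
  refine le_csInf ⟨_, Finset.univ.map ⟨singleton, Set.singleton_injective⟩, rfl, ?_, ?_⟩ ?_
  · simp
  · exact fun v => ⟨{v}, by simp⟩
  · rintro _ ⟨𝒞, rfl, hcl, hcov⟩
    exact h 𝒞 hcl hcov

section Johnson

variable {N : ℕ}

/-- Stars are the cliques contained in a type A clique; every other clique of `J(N, 2)` lies in
a type B clique. -/
def IsStar (C : Set {S : Finset (Fin N) // S.card = 2}) : Prop :=
  ∃ x, ∀ S ∈ C, x ∈ S.1

theorem intersecting_image_val_of_isClique_johnson {C : Set {S : Finset (Fin N) // S.card = 2}}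
    (hC : (johnson N 2).IsClique C) : (Subtype.val '' C).Intersecting := by
  rintro _ ⟨S, hS, rfl⟩ _ ⟨T, hT, rfl⟩
  rw [Finset.not_disjoint_iff_nonempty_inter, ← Finset.card_pos]
  obtain rfl | hST := eq_or_ne S T
  · simp [S.2]
  · simp [(hC hS hT hST).2]

theorem ncard_le_three_of_isClique_johnson_of_not_isStar
    {C : Set {S : Finset (Fin N) // S.card = 2}} (hC : (johnson N 2).IsClique C)
    (hstar : ¬ IsStar C) : C.ncard ≤ 3 := by
  obtain ⟨s, hs, hsub⟩ :=
    (intersecting_image_val_of_isClique_johnson hC).exists_card_le_three_forall_subset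
      (by rintro _ ⟨S, -, rfl⟩; exact S.2) (by simpa [IsStar] using hstar)
  calc C.ncard = (Subtype.val '' C).ncard :=
        (Set.ncard_image_of_injective _ Subtype.val_injective).symm
    _ ≤ (s.powersetCard 2 : Set (Finset (Fin N))).ncard :=
      Set.ncard_le_ncard (by rintro _ ⟨S, hS, rfl⟩; simp [hsub S (Set.mem_image_of_mem _ hS), S.2])
        (Finset.finite_toSet _)
    _ = s.card.choose 2 := by rw [Set.ncard_coe_finset, Finset.card_powersetCard]
    _ ≤ 3 := Nat.choose_le_choose 2 hs

theorem choose_card_two_le_three_mul_card (ℬ : Finset (Set {S : Finset (Fin N) // S.card = 2}))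
    (hℬ : ∀ C ∈ ℬ, (johnson N 2).IsClique C ∧ ¬ IsStar C) (M : Finset (Fin N))
    (hcov : ∀ v : {S : Finset (Fin N) // S.card = 2}, v.1 ⊆ M → ∃ C ∈ ℬ, v ∈ C) :
    M.card.choose 2 ≤ 3 * ℬ.card := by
  have hsub : (M.powersetCard 2 : Set (Finset (Fin N))) ⊆ ⋃ C ∈ ℬ, Subtype.val '' C := by
    intro S hS
    rw [Finset.mem_coe, Finset.mem_powersetCard] at hS
    obtain ⟨C, hC, hSC⟩ := hcov ⟨S, hS.2⟩ hS.1
    exact Set.mem_biUnion hC ⟨_, hSC, rfl⟩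
  calc M.card.choose 2 = (M.powersetCard 2 : Set (Finset (Fin N))).ncard := by
        rw [Set.ncard_coe_finset, Finset.card_powersetCard]
    _ ≤ (⋃ C ∈ ℬ, Subtype.val '' C).ncard := Set.ncard_le_ncard hsub (Set.toFinite _)
    _ ≤ ∑ C ∈ ℬ, (Subtype.val '' C).ncard := ℬ.set_ncard_biUnion_le _
    _ ≤ ℬ.card • 3 := Finset.sum_le_card_nsmul _ _ _ fun C hC => by
        rw [Set.ncard_image_of_injective _ Subtype.val_injective]
        exact ncard_le_three_of_isClique_johnson_of_not_isStar (hℬ C hC).1 (hℬ C hC).2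
    _ = 3 * ℬ.card := by rw [smul_eq_mul, mul_comm]

theorem sub_two_le_card_of_isClique_johnson_of_cover
    (𝒞 : Finset (Set {S : Finset (Fin N) // S.card = 2}))
    (hcl : ∀ C ∈ 𝒞, (johnson N 2).IsClique C) (hcov : ∀ v, ∃ C ∈ 𝒞, v ∈ C) :
    N - 2 ≤ 𝒞.card := by
  classical
  obtain ⟨A, hA, hcenter⟩ := (𝒞.filter IsStar).exists_card_le_forall_exists
    (fun C x => ∀ S ∈ C, x ∈ S.1) fun C hC => (Finset.mem_filter.1 hC).2
  have hpairs := choose_card_two_le_three_mul_card (𝒞.filter (¬ IsStar ·))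
    (fun C hC => ⟨hcl C (Finset.mem_filter.1 hC).1, (Finset.mem_filter.1 hC).2⟩) Aᶜ
    fun v hv => by
      obtain ⟨C, hC, hvC⟩ := hcov v
      refine ⟨C, Finset.mem_filter.2 ⟨hC, fun hstar => ?_⟩, hvC⟩
      obtain ⟨x, hxA, hx⟩ := hcenter C (Finset.mem_filter.2 ⟨hC, hstar⟩)
      exact Finset.mem_compl.1 (hv (hx v hvC)) hxA
  have hsplit := Finset.card_filter_add_card_filter_not (s := 𝒞) IsStar
  have hcompl := Finset.card_add_card_compl A
  have hbound := Nat.sub_two_le_choose_two_add_two_div_three Aᶜ.card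
  rw [Fintype.card_fin] at hcompl
  omega

end Johnson

theorem theta_johnson_two_ge_general (N : ℕ) :
    N - 2 ≤ theta (johnson N 2) ∧
    ∀ m : ℕ, m ≤ N → N - 2 ≤ N - m + (Nat.choose m 2 + 2) / 3 :=
  ⟨le_theta sub_two_le_card_of_isClique_johnson_of_cover, fun m _ => by
    have := Nat.sub_two_le_choose_two_add_two_div_three m
    omega⟩

/-- For `N > 2`, `θ(J(N, 2)) ≥ N - 2`.  Moreover, for any split of a clique
cover into `n_A` type A cliques and `n_B` type B cliques, setting `m = N - n_A`
one has `n_A + n_B ≥ N - m + ⌈binom(m, 2)/3⌉ ≥ N - 2`; in particular the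
arithmetic bound `N - m + ⌈binom(m, 2)/3⌉ ≥ N - 2` holds for all `m ≤ N`
(here `⌈a/3⌉ = (a + 2)/3` in natural-number arithmetic). -/
theorem theta_johnson_two_ge (N : ℕ) (hN : 2 < N) :
    N - 2 ≤ theta (johnson N 2) ∧
    ∀ m : ℕ, m ≤ N → N - 2 ≤ N - m + (Nat.choose m 2 + 2) / 3 :=
  theta_johnson_two_ge_general N
end

section
/- For N > 3, the family { A_S^N : S ∈ S_N } is a clique cover of the Johnson graph J(N,3), where S_N is the set of 2-element subsets {i,j} of [N] that are contained either in {1,...,⌊N/2⌋} or in {⌊N/2⌋+1,...,N}. In particular θ(J(N,3)) ≤ ⌊(N−1)²/4⌋. -/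
/-- The family `{A_P : P ∈ S_N}` where `S_N` consists of the 2-element subsets
of `[N]` contained in the lower half `{1, …, ⌊N/2⌋}` or in the upper half
`{⌊N/2⌋+1, …, N}`; the clique `A_P` consists of the 3-sets containing `P`. -/
def coverC (N : ℕ) : Set (Set {T : Finset (Fin N) // T.card = 3}) :=
  {C | ∃ P : Finset (Fin N), P.card = 2 ∧
        ((∀ x ∈ P, (x : ℕ) < N / 2) ∨ (∀ x ∈ P, N / 2 ≤ (x : ℕ))) ∧
        C = {T | P ⊆ T.1}}

open Finset

theorem johnson_isClique_setOf_subset {N k : ℕ} {P : Finset (Fin N)} (hP : #P = k - 1) :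
    (johnson N k).IsClique {S | P ⊆ S.1} := by
  intro S hS T hT hST
  refine ⟨hST, ?_⟩
  have hlow : #P ≤ #(S.1 ∩ T.1) := card_le_card (subset_inter hS hT)
  have hup : #(S.1 ∩ T.1) ≤ k := (card_le_card inter_subset_left).trans_eq S.2
  have hne : #(S.1 ∩ T.1) ≠ k := fun h =>
    hST <| Subtype.ext <| (eq_of_subset_of_card_le inter_subset_left (by rw [h, S.2])).symm.trans
      (eq_of_subset_of_card_le inter_subset_right (by rw [h, T.2]))
  omega

theorem theta_le_card {V : Type*} {G : SimpleGraph V} (𝒞 : Finset (Set V))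
    (hclique : ∀ C ∈ 𝒞, G.IsClique C) (hcover : ∀ v, ∃ C ∈ 𝒞, v ∈ C) : theta G ≤ #𝒞 :=
  Nat.sInf_le ⟨𝒞, rfl, hclique, hcover⟩

theorem Finset.exists_subset_card_eq_forall_or_forall_not {α : Type*} {s : Finset α} {k : ℕ}
    (p : α → Prop) [DecidablePred p] (hs : 2 * k ≤ #s + 1) :
    ∃ t ⊆ s, #t = k ∧ ((∀ x ∈ t, p x) ∨ ∀ x ∈ t, ¬ p x) := by
  have hsplit := card_filter_add_card_filter_not (s := s) p
  rcases le_or_gt k #(s.filter p) with h | h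
  · obtain ⟨t, hts, ht⟩ := exists_subset_card_eq h
    exact ⟨t, hts.trans (filter_subset _ _), ht, .inl fun x hx => (mem_filter.mp (hts hx)).2⟩
  · obtain ⟨t, hts, ht⟩ := exists_subset_card_eq (s := s.filter (¬ p ·)) (n := k) (by omega)
    exact ⟨t, hts.trans (filter_subset _ _), ht, .inr fun x hx => (mem_filter.mp (hts hx)).2⟩

theorem Nat.choose_two_half_add_choose_two_half (N : ℕ) :
    (N / 2).choose 2 + (N - N / 2).choose 2 = (N - 1) ^ 2 / 4 := by
  have hdouble (m : ℕ) : (m + 1).choose 2 * 2 = (m + 1) * m := by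
    rw [Nat.choose_two_right, Nat.add_sub_cancel,
      Nat.div_two_mul_two_of_even (Nat.mul_comm m (m + 1) ▸ m.even_mul_succ_self)]
  rcases Nat.even_or_odd' N with ⟨m, rfl | rfl⟩ <;> rcases m with _ | m
  · rfl
  · have h := hdouble m
    rw [show 2 * (m + 1) / 2 = m + 1 by omega, show 2 * (m + 1) - (m + 1) = m + 1 by omega,
      show 2 * (m + 1) - 1 = 2 * m + 1 by omega]
    symm
    apply Nat.div_eq_of_lt_le <;> nlinarith
  · rfl
  · have h := hdouble m
    have h' := hdouble (m + 1)
    rw [show (2 * (m + 1) + 1) / 2 = m + 1 by omega,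
      show 2 * (m + 1) + 1 - (m + 1) = m + 1 + 1 by omega, Nat.add_sub_cancel]
    symm
    apply Nat.div_eq_of_lt_le <;> nlinarith

/-- The index set `S_N` of `coverC`. -/
def halfPairs (N : ℕ) : Finset (Finset (Fin N)) :=
  (univ.filter fun x : Fin N => (x : ℕ) < N / 2).powersetCard 2 ∪
    (univ.filter fun x : Fin N => ¬ (x : ℕ) < N / 2).powersetCard 2

theorem mem_halfPairs {N : ℕ} {P : Finset (Fin N)} :
    P ∈ halfPairs N ↔ #P = 2 ∧ ((∀ x ∈ P, (x : ℕ) < N / 2) ∨ ∀ x ∈ P, N / 2 ≤ (x : ℕ)) := by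
  simp [halfPairs, subset_iff, and_comm, ← and_or_left]

theorem card_halfPairs_le (N : ℕ) :
    #(halfPairs N) ≤ (N / 2).choose 2 + (N - N / 2).choose 2 := by
  have hlow : #(univ.filter fun x : Fin N => (x : ℕ) < N / 2) = N / 2 := by
    rw [Fin.card_filter_val_lt]; omega
  have hhigh : #(univ.filter fun x : Fin N => ¬ (x : ℕ) < N / 2) = N - N / 2 := by
    rw [filter_not, card_sdiff_of_subset (filter_subset _ _), hlow, card_univ, Fintype.card_fin]
  exact (card_union_le _ _).trans_eq (by rw [card_powersetCard, card_powersetCard, hlow, hhigh])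

theorem coverC_eq_image_halfPairs (N : ℕ) :
    coverC N = ↑((halfPairs N).image fun P => {T : {T : Finset (Fin N) // #T = 3} | P ⊆ T.1}) := by
  ext C
  simp [coverC, mem_halfPairs, eq_comm, and_assoc]

theorem isClique_of_mem_coverC {N : ℕ} {C : Set {T : Finset (Fin N) // #T = 3}}
    (hC : C ∈ coverC N) : (johnson N 3).IsClique C := by
  obtain ⟨P, hP, -, rfl⟩ := hC
  exact johnson_isClique_setOf_subset hP

theorem exists_mem_coverC {N : ℕ} (v : {T : Finset (Fin N) // #T = 3}) :
    ∃ C ∈ coverC N, v ∈ C := by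
  obtain ⟨P, hPv, hP, hside⟩ :=
    v.1.exists_subset_card_eq_forall_or_forall_not (k := 2) (fun x => (x : ℕ) < N / 2) (by omega)
  exact ⟨_, ⟨P, hP, hside.imp_right fun h x hx => not_lt.mp (h x hx), rfl⟩, hPv⟩

theorem coverC_is_cover_general (N : ℕ) :
    (∀ C ∈ coverC N, (johnson N 3).IsClique C) ∧
    (∀ v, ∃ C ∈ coverC N, v ∈ C) ∧
    theta (johnson N 3) ≤ (N - 1) ^ 2 / 4 := by
  refine ⟨fun C => isClique_of_mem_coverC, exists_mem_coverC, ?_⟩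
  have hcover := coverC_eq_image_halfPairs N
  calc theta (johnson N 3)
      ≤ #((halfPairs N).image fun P => {T : {T : Finset (Fin N) // #T = 3} | P ⊆ T.1}) :=
        theta_le_card _ (fun C hC => isClique_of_mem_coverC (hcover ▸ hC))
          (fun v => by simpa only [hcover, mem_coe] using exists_mem_coverC v)
    _ ≤ #(halfPairs N) := card_image_le
    _ ≤ (N / 2).choose 2 + (N - N / 2).choose 2 := card_halfPairs_le N
    _ = (N - 1) ^ 2 / 4 := Nat.choose_two_half_add_choose_two_half N

/-- For `N > 3`, the family `{A_P : P ∈ S_N}` is a clique cover of `J(N, 3)`;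
in particular `θ(J(N, 3)) ≤ ⌊(N-1)²/4⌋`. -/
theorem coverC_is_cover (N : ℕ) (hN : 3 < N) :
    (∀ C ∈ coverC N, (johnson N 3).IsClique C) ∧
    (∀ v, ∃ C ∈ coverC N, v ∈ C) ∧
    theta (johnson N 3) ≤ (N - 1) ^ 2 / 4 :=
  coverC_is_cover_general N
end

section
/- Every graph with n vertices and m edges contains at least (4m/(3n))·(m − n²/4) triangles (Goodman's bound). -/
/-!
Summing over the `2m` ordered edges `(u, v)`, the number of common neighbours of `u` and `v`
is at least `d(u) + d(v) - n`, and every triangle is counted six times, so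
`6T ≥ 2 ∑_v d(v)² - 2nm`. Cauchy–Schwarz gives `∑_v d(v)² ≥ (2m)² / n`, whence
`3nT ≥ 4m² - n²m`.
-/

open Finset

namespace SimpleGraph

variable {V : Type*} [Fintype V] (G : SimpleGraph V) [DecidableRel G.Adj]

lemma sum_dart_fst {M : Type*} [AddCommMonoid M] (f : V → M) :
    ∑ d : G.Dart, f d.fst = ∑ v, G.degree v • f v := by
  classical
  rw [← sum_fiberwise univ fun d : G.Dart => d.fst]
  refine sum_congr rfl fun v _ => ?_
  rw [sum_congr rfl fun d hd => by rw [(mem_filter.1 hd).2], sum_const]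
  congr 1
  convert G.dart_fst_fiber_card_eq_degree v

lemma sum_dart_snd {M : Type*} [AddCommMonoid M] (f : V → M) :
    ∑ d : G.Dart, f d.snd = ∑ v, G.degree v • f v := by
  rw [← sum_dart_fst]
  exact Fintype.sum_bijective _ Dart.symm_involutive.bijective _ _ fun _ => rfl

variable [DecidableEq V]

lemma degree_add_degree_le (u v : V) :
    G.degree u + G.degree v ≤ Fintype.card V + #(G.neighborFinset u ∩ G.neighborFinset v) := by
  rw [← card_neighborFinset_eq_degree, ← card_neighborFinset_eq_degree,
    ← card_union_add_card_inter]
  exact Nat.add_le_add_right (card_le_univ _) _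

lemma sum_dart_card_inter_neighborFinset_le :
    ∑ d : G.Dart, #(G.neighborFinset d.fst ∩ G.neighborFinset d.snd)
      ≤ 6 * #(G.cliqueFinset 3) := by
  rw [← card_sigma]
  refine card_le_mul_card_image_of_maps_to
    (f := fun x => ({x.1.fst, x.1.snd, x.2} : Finset V)) ?_ 6 ?_
  · rintro ⟨d, w⟩ hw
    simp only [mem_sigma, mem_univ, mem_inter, mem_neighborFinset, true_and] at hw
    rw [mem_cliqueFinset_iff, is3Clique_triple_iff]
    exact ⟨d.adj, hw.1, hw.2⟩
  · intro t ht
    have hcard : #t = 3 := (mem_cliqueFinset_iff.1 ht).card_eq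
    -- a dart inside `t` determines its apex, the third vertex of `t`
    calc _ ≤ #t.offDiag := card_le_card_of_injOn (fun x => x.1.toProd) ?_ ?_
      _ = 6 := by rw [offDiag_card, hcard]
    · rintro ⟨d, w⟩ hx
      simp only [coe_filter, Set.mem_ofPred_eq, mem_sigma, mem_univ, true_and] at hx
      rw [← hx.2]
      simp [d.adj.ne]
    · rintro ⟨d, w⟩ hx ⟨d', w'⟩ hx' hdd'
      simp only [coe_filter, Set.mem_ofPred_eq, mem_sigma, mem_univ, mem_inter,
        mem_neighborFinset, true_and] at hx hx'
      obtain rfl : d = d' := Dart.ext _ _ hdd'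
      have hw : w ∈ ({d.fst, d.snd, w'} : Finset V) := by rw [hx'.2, ← hx.2]; simp
      simp only [mem_insert, mem_singleton, hx.1.1.ne', hx.1.2.ne', false_or] at hw
      rw [hw]

lemma two_mul_sum_degree_sq_le :
    2 * ∑ v, G.degree v ^ 2
      ≤ Fintype.card V * (2 * #G.edgeFinset) + 6 * #(G.cliqueFinset 3) := calc
  _ = ∑ d : G.Dart, (G.degree d.fst + G.degree d.snd) := by
    rw [sum_add_distrib, sum_dart_fst G (G.degree ·), sum_dart_snd G (G.degree ·), ← two_mul]
    simp only [smul_eq_mul, sq]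
  _ ≤ ∑ d : G.Dart, (Fintype.card V + #(G.neighborFinset d.fst ∩ G.neighborFinset d.snd)) :=
    sum_le_sum fun d _ => G.degree_add_degree_le d.fst d.snd
  _ = Fintype.card V * (2 * #G.edgeFinset)
      + ∑ d : G.Dart, #(G.neighborFinset d.fst ∩ G.neighborFinset d.snd) := by
    rw [sum_add_distrib, sum_const, card_univ, dart_card_eq_twice_card_edges, smul_eq_mul,
      mul_comm]
  _ ≤ _ := Nat.add_le_add_left G.sum_dart_card_inter_neighborFinset_le _

lemma four_mul_sq_card_edgeFinset_le :
    4 * #G.edgeFinset ^ 2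
      ≤ Fintype.card V ^ 2 * #G.edgeFinset + 3 * Fintype.card V * #(G.cliqueFinset 3) := by
  have cauchy_schwarz : (2 * #G.edgeFinset) ^ 2 ≤ Fintype.card V * ∑ v, G.degree v ^ 2 := by
    rw [← sum_degrees_eq_twice_card_edges, ← card_univ]
    exact sq_sum_le_card_mul_sum_sq
  nlinarith [Nat.mul_le_mul_left (Fintype.card V) G.two_mul_sum_degree_sq_le]

end SimpleGraph

/-- Goodman's bound: every graph with `n` vertices and `m` edges contains at
least `(4m/(3n)) · (m - n²/4)` triangles. -/
theorem goodman_bound {V : Type*} [Fintype V] [DecidableEq V]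
    (G : SimpleGraph V) [DecidableRel G.Adj] :
    4 * (G.edgeFinset.card : ℝ) / (3 * Fintype.card V) *
        ((G.edgeFinset.card : ℝ) - (Fintype.card V : ℝ) ^ 2 / 4)
      ≤ ((G.cliqueFinset 3).card : ℝ) := by
  rcases (Fintype.card V).eq_zero_or_pos with hn | hn
  · simp [hn]
  have key : (4 * #G.edgeFinset ^ 2 : ℝ)
      ≤ Fintype.card V ^ 2 * #G.edgeFinset + 3 * Fintype.card V * #(G.cliqueFinset 3) :=
    mod_cast G.four_mul_sq_card_edgeFinset_le
  rw [div_mul_eq_mul_div, div_le_iff₀ (by positivity)]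
  linarith
end

section
/- For all N ≥ 2 and 0 < k < N, the clique covering number of the Johnson graph satisfies θ(J(N,k)) ≤ binom(N−2, k−1). -/
open Finset

namespace SimpleGraph

variable {V W₁ W₂ : Type*} {G : SimpleGraph V}

def IsCliqueCover (G : SimpleGraph V) (𝒞 : Finset (Set V)) : Prop :=
  (∀ C ∈ 𝒞, G.IsClique C) ∧ ∀ v, ∃ C ∈ 𝒞, v ∈ C

theorem theta_le_card {𝒞 : Finset (Set V)} (h : G.IsCliqueCover 𝒞) : theta G ≤ #𝒞 :=
  Nat.sInf_le ⟨𝒞, rfl, h⟩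

theorem exists_isCliqueCover_card_eq_theta [Finite V] (G : SimpleGraph V) :
    ∃ 𝒞 : Finset (Set V), G.IsCliqueCover 𝒞 ∧ #𝒞 = theta G := by
  classical
  have : Fintype V := Fintype.ofFinite V
  have hsingletons : G.IsCliqueCover (univ.image fun v => {v}) :=
    ⟨by simp, fun v => ⟨{v}, by simp, rfl⟩⟩
  obtain ⟨𝒞, hcard, hcover⟩ := Nat.sInf_mem (s := {n | ∃ 𝒞 : Finset (Set V), #𝒞 = n ∧
    G.IsCliqueCover 𝒞}) ⟨_, _, rfl, hsingletons⟩
  exact ⟨𝒞, hcover, hcard⟩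

theorem theta_le_one_of_isClique_univ (h : G.IsClique Set.univ) : theta G ≤ 1 :=
  theta_le_card (𝒞 := {Set.univ})
    ⟨by simpa using h, fun _ => ⟨_, mem_singleton_self _, trivial⟩⟩

theorem IsClique.image {H : SimpleGraph W₁} (f : G →g H) {s : Set V} (hs : G.IsClique s) :
    H.IsClique (f '' s) := by
  rintro _ ⟨a, ha, rfl⟩ _ ⟨b, hb, rfl⟩ hne
  exact f.map_adj (hs ha hb fun hab => hne (hab ▸ rfl))

theorem theta_le_add_of_hom [Finite W₁] [Finite W₂] {H : SimpleGraph V}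
    {G₁ : SimpleGraph W₁} {G₂ : SimpleGraph W₂} (f₁ : G₁ →g H) (f₂ : G₂ →g H)
    (hf : ∀ v, v ∈ Set.range f₁ ∨ v ∈ Set.range f₂) :
    theta H ≤ theta G₁ + theta G₂ := by
  classical
  obtain ⟨𝒞₁, ⟨hclique₁, hcover₁⟩, hcard₁⟩ := G₁.exists_isCliqueCover_card_eq_theta
  obtain ⟨𝒞₂, ⟨hclique₂, hcover₂⟩, hcard₂⟩ := G₂.exists_isCliqueCover_card_eq_theta
  have hcover : H.IsCliqueCover (𝒞₁.image (f₁ '' ·) ∪ 𝒞₂.image (f₂ '' ·)) := by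
    refine ⟨?_, fun v => ?_⟩
    · simp only [mem_union, mem_image]
      rintro _ (⟨C, hC, rfl⟩ | ⟨C, hC, rfl⟩)
      exacts [(hclique₁ C hC).image f₁, (hclique₂ C hC).image f₂]
    · rcases hf v with ⟨w, rfl⟩ | ⟨w, rfl⟩
      · obtain ⟨C, hC, hw⟩ := hcover₁ w
        exact ⟨f₁ '' C, mem_union_left _ (mem_image_of_mem _ hC), w, hw, rfl⟩
      · obtain ⟨C, hC, hw⟩ := hcover₂ w
        exact ⟨f₂ '' C, mem_union_right _ (mem_image_of_mem _ hC), w, hw, rfl⟩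
  calc theta H ≤ _ := theta_le_card hcover
    _ ≤ _ := card_union_le _ _
    _ ≤ #𝒞₁ + #𝒞₂ := add_le_add card_image_le card_image_le
    _ = theta G₁ + theta G₂ := by rw [hcard₁, hcard₂]

end SimpleGraph

namespace Finset

theorem card_inter_lt_of_ne {α : Type*} [DecidableEq α] {s t : Finset α} {k : ℕ}
    (hs : #s = k) (ht : #t = k) (hne : s ≠ t) : #(s ∩ t) < k := by
  by_contra! hle
  have hst : s ∩ t = s := eq_of_subset_of_card_le inter_subset_left (by omega)
  exact hne (eq_of_subset_of_card_le (inter_eq_left.mp hst) (by omega))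

theorem map_castSuccEmb_preimage_castSucc {n : ℕ} (s : Finset (Fin (n + 1))) :
    (s.preimage Fin.castSucc (Fin.castSucc_injective n).injOn).map Fin.castSuccEmb =
      s.erase (Fin.last n) := by
  ext j
  cases j using Fin.lastCases <;> simp [Fin.castSucc_ne_last]

end Finset

theorem theta_johnson_le_one {N k : ℕ} (h : k = 1 ∨ N = k + 1) : theta (johnson N k) ≤ 1 := by
  refine SimpleGraph.theta_le_one_of_isClique_univ fun S _ T _ hne => ⟨hne, ?_⟩
  have hlt := card_inter_lt_of_ne S.2 T.2 (Subtype.coe_ne_coe.mpr hne)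
  rcases h with rfl | rfl
  · omega
  · have hunion := card_union_add_card_inter S.1 T.1
    have hle : #(S.1 ∪ T.1) ≤ k + 1 := by simpa using card_le_univ (S.1 ∪ T.1)
    rw [S.2, T.2] at hunion
    omega

def johnsonCastSucc (N k : ℕ) : johnson N k →g johnson (N + 1) k where
  toFun S := ⟨S.1.map Fin.castSuccEmb, by simp [S.2]⟩
  map_rel' := by
    rintro S T ⟨hne, hcard⟩
    refine ⟨fun h => hne (Subtype.ext (map_injective _ (congrArg Subtype.val h))), ?_⟩
    simpa [← map_inter] using hcard

def johnsonInsertLast (N k : ℕ) : johnson N k →g johnson (N + 1) (k + 1) where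
  toFun S :=
    ⟨insert (Fin.last N) (S.1.map Fin.castSuccEmb), by simp [S.2, Fin.castSucc_ne_last]⟩
  map_rel' := by
    rintro S T ⟨hne, hcard⟩
    refine ⟨fun h => hne (Subtype.ext ?_), ?_⟩
    · simpa [erase_insert_eq_erase, Fin.castSucc_ne_last] using
        congrArg (fun s : Finset _ => s.erase (Fin.last N)) (congrArg Subtype.val h)
    · have hlt := card_inter_lt_of_ne S.2 T.2 (Subtype.coe_ne_coe.mpr hne)
      simp [← map_inter, Fin.castSucc_ne_last, hcard]
      omega

theorem johnson_succ_mem_range_or_mem_range (N k : ℕ)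
    (S : {S : Finset (Fin (N + 1)) // #S = k + 1}) :
    S ∈ Set.range (johnsonCastSucc N (k + 1)) ∨ S ∈ Set.range (johnsonInsertLast N k) := by
  set S' := S.1.preimage Fin.castSucc (Fin.castSucc_injective N).injOn
  have hS' : S'.map Fin.castSuccEmb = S.1.erase (Fin.last N) :=
    S.1.map_castSuccEmb_preimage_castSucc
  by_cases hlast : Fin.last N ∈ S.1
  · right
    have hcard : #S' = k := by
      rw [← card_map Fin.castSuccEmb, hS', card_erase_of_mem hlast, S.2, Nat.add_sub_cancel]
    refine ⟨⟨S', hcard⟩, Subtype.ext ?_⟩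
    show insert _ _ = _
    rw [hS', insert_erase hlast]
  · left
    rw [erase_eq_of_notMem hlast] at hS'
    exact ⟨⟨S', by rw [← card_map Fin.castSuccEmb, hS', S.2]⟩, Subtype.ext hS'⟩

theorem theta_johnson_succ_le (N k : ℕ) :
    theta (johnson (N + 1) (k + 1)) ≤ theta (johnson N (k + 1)) + theta (johnson N k) :=
  SimpleGraph.theta_le_add_of_hom (johnsonCastSucc N (k + 1)) (johnsonInsertLast N k)
    (johnson_succ_mem_range_or_mem_range N k)

theorem theta_johnson_add_two_le_choose (n k : ℕ) (hk : k ≤ n) :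
    theta (johnson (n + 2) (k + 1)) ≤ n.choose k := by
  induction n generalizing k with
  | zero =>
    obtain rfl : k = 0 := Nat.le_zero.mp hk
    simpa using theta_johnson_le_one (Or.inl rfl)
  | succ n ih =>
    rcases k with _ | j
    · simpa using theta_johnson_le_one (Or.inl rfl)
    rcases (show j < n ∨ j = n by omega) with hj | rfl
    · calc theta (johnson (n + 3) (j + 2))
          ≤ theta (johnson (n + 2) (j + 2)) + theta (johnson (n + 2) (j + 1)) :=
            theta_johnson_succ_le _ _
        _ ≤ n.choose (j + 1) + n.choose j := add_le_add (ih _ hj) (ih _ hj.le)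
        _ = (n + 1).choose (j + 1) := by rw [Nat.choose_succ_succ', add_comm]
    · simpa using theta_johnson_le_one (Or.inr rfl)

theorem theta_johnson_le_choose_general (N k : ℕ) (hk : 0 < k) (hkN : k < N) :
    theta (johnson N k) ≤ (N - 2).choose (k - 1) := by
  obtain ⟨n, rfl⟩ : ∃ n, N = n + 2 := ⟨N - 2, by omega⟩
  obtain ⟨j, rfl⟩ : ∃ j, k = j + 1 := ⟨k - 1, by omega⟩
  simpa using theta_johnson_add_two_le_choose n j (by omega)

/-- For all `N ≥ 2` and `0 < k < N`, `θ(J(N, k)) ≤ binom(N-2, k-1)`. -/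
theorem theta_johnson_le_choose (N k : ℕ) (hN : 2 ≤ N) (hk : 0 < k) (hkN : k < N) :
    theta (johnson N k) ≤ (N - 2).choose (k - 1) :=
  theta_johnson_le_choose_general N k hk hkN
end

section
/- The clique number of the Johnson graph J(N,k) satisfies ω(J(N,k)) = max(N − k + 1, k + 1) for N > 2, 0 < k < N. -/
/-- The clique number of a graph: the largest size of a clique. -/
noncomputable def omega {V : Type*} (G : SimpleGraph V) : ℕ :=
  sSup {n | ∃ C : Finset V, G.IsNClique n C}

/-!
Two distinct members `A`, `B` of a clique fix `S = A ∩ B`, with `k - 1` points, and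
`U = A ∪ B`, with `k + 1` points. For every other member `D`, inclusion–exclusion gives
`|D ∩ S| + |D ∩ U| = 2 (k - 1)`, so `D ⊇ S` or `D ⊆ U`; a member with `D ⊉ S` and one with
`E ⊈ U` would meet in fewer than `k - 1` points. So a clique consists of `k`-sets through a
common `(k - 1)`-set, at most `N - k + 1` of them, or of `k`-subsets of a `(k + 1)`-set, at most
`k + 1` of them; both bounds are attained.
-/

open Finset

section SetFamily

variable {α : Type*}

theorem card_le_succ_of_injOn_powersetCard {ι : Type*} {s : Finset ι} {f : ι → Finset α}
    {U : Finset α} {m : ℕ} (hU : #U = m + 1) (hf : ∀ i ∈ s, f i ⊆ U ∧ #(f i) = m)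
    (hinj : Set.InjOn f s) : #s ≤ m + 1 := by
  have := card_le_card_of_injOn f (fun i hi => mem_powersetCard.2 (hf i hi)) hinj
  rwa [card_powersetCard, hU, Nat.choose_succ_self_right] at this

variable [DecidableEq α] {k : ℕ}

theorem card_inter_inter_add_card_inter_union (A B D : Finset α) :
    #(D ∩ (A ∩ B)) + #(D ∩ (A ∪ B)) = #(D ∩ A) + #(D ∩ B) := by
  rw [inter_inter_distrib_left, inter_union_distrib_left]
  exact card_inter_add_card_union _ _

theorem card_inter_lt_of_not_subset {s t : Finset α} (h : ¬s ⊆ t) : #(t ∩ s) < #s := by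
  rw [inter_comm]
  exact card_lt_card (inter_subset_left.ssubset_of_ne (mt inter_eq_left.1 h))

variable {A B D : Finset α}

theorem subset_union_of_not_inter_subset (hD : #D = k) (hAB : #(A ∩ B) = k - 1)
    (hDA : #(D ∩ A) = k - 1) (hDB : #(D ∩ B) = k - 1) (h : ¬A ∩ B ⊆ D) : D ⊆ A ∪ B := by
  have hsum := card_inter_inter_add_card_inter_union A B D
  have hS := card_inter_lt_of_not_subset h
  have hU : #D ≤ #(D ∩ (A ∪ B)) := by omega
  exact inter_eq_left.1 (eq_of_subset_of_card_le inter_subset_left hU)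

theorem inter_union_eq_of_not_subset_union (hD : #D = k) (hAB : #(A ∩ B) = k - 1)
    (hDA : #(D ∩ A) = k - 1) (hDB : #(D ∩ B) = k - 1) (h : ¬D ⊆ A ∪ B) :
    D ∩ (A ∪ B) = A ∩ B := by
  have hsum := card_inter_inter_add_card_inter_union A B D
  have hU : #(D ∩ (A ∪ B)) < #D := by
    simpa only [inter_comm D] using card_inter_lt_of_not_subset h
  have hSD : A ∩ B ⊆ D := by
    by_contra hS
    have := card_inter_lt_of_not_subset hS
    omega
  have hSU : A ∩ B ⊆ D ∩ (A ∪ B) := subset_inter hSD inter_subset_union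
  exact (eq_of_subset_of_card_le hSU (by omega)).symm

theorem forall_inter_subset_or_forall_subset_union {𝒜 : Set (Finset α)}
    (hcard : ∀ D ∈ 𝒜, #D = k) (hpair : 𝒜.Pairwise fun D E => #(D ∩ E) = k - 1)
    (hA : A ∈ 𝒜) (hB : B ∈ 𝒜) (hAB : A ≠ B) :
    (∀ D ∈ 𝒜, A ∩ B ⊆ D) ∨ ∀ D ∈ 𝒜, D ⊆ A ∪ B := by
  by_contra! ⟨⟨D, hD, hSD⟩, ⟨E, hE, hEU⟩⟩
  have hDA : D ≠ A := by rintro rfl; exact hSD inter_subset_left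
  have hDB : D ≠ B := by rintro rfl; exact hSD inter_subset_right
  have hEA : E ≠ A := by rintro rfl; exact hEU subset_union_left
  have hEB : E ≠ B := by rintro rfl; exact hEU subset_union_right
  have hDU := subset_union_of_not_inter_subset (hcard D hD) (hpair hA hB hAB)
    (hpair hD hA hDA) (hpair hD hB hDB) hSD
  have hEU' := inter_union_eq_of_not_subset_union (hcard E hE) (hpair hA hB hAB)
    (hpair hE hA hEA) (hpair hE hB hEB) hEU
  have hDE : D ≠ E := by rintro rfl; exact hEU hDU
  -- `E` meets `A ∪ B`, which contains `D`, only in `A ∩ B`, which `D` does not contain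
  have hinter : D ∩ E = D ∩ (A ∩ B) := by
    rw [← hEU', inter_comm E, ← inter_assoc, inter_eq_left.2 hDU]
  have hlt := card_inter_lt_of_not_subset hSD
  have hcardDE : #(D ∩ (A ∩ B)) = k - 1 := hinter ▸ hpair hD hE hDE
  have := hpair hA hB hAB
  omega

theorem card_inter_eq_of_mem_powersetCard {T D E : Finset α} (hT : #T = k + 1)
    (hD : D ∈ T.powersetCard k) (hE : E ∈ T.powersetCard k) (hDE : D ≠ E) :
    #(D ∩ E) = k - 1 := by
  rw [mem_powersetCard] at hD hE
  have hle : #(D ∪ E) ≤ k + 1 := hT ▸ card_le_card (union_subset hD.1 hE.1)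
  have hlt : #D < #(D ∪ E) := by
    refine card_lt_card (subset_union_left.ssubset_of_ne fun h => hDE ?_)
    exact (eq_of_subset_of_card_le (h ▸ subset_union_right) (by omega)).symm
  have := card_inter_add_card_union D E
  omega

theorem card_inter_insert_eq {S : Finset α} {x y : α} (hx : x ∉ S) (hy : y ∉ S) (hxy : x ≠ y) :
    #(insert x S ∩ insert y S) = #S := by
  rw [insert_inter_of_notMem (by simp [hxy, hx]), inter_insert_of_notMem hy, inter_self]

end SetFamily

section Johnson

variable {N k : ℕ}

theorem isClique_johnson_iff {s : Set {S : Finset (Fin N) // #S = k}} :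
    (johnson N k).IsClique s ↔ (Subtype.val '' s).Pairwise fun D E => #(D ∩ E) = k - 1 := by
  rw [Subtype.val_injective.injOn.pairwise_image]
  exact ⟨fun h D hD E hE hDE => (h hD hE hDE).2, fun h D hD E hE hDE => ⟨hDE, h hD hE hDE⟩⟩

theorem exists_isNClique_johnson_of_pairwise {𝒜 : Finset (Finset (Fin N))}
    (hcard : ∀ D ∈ 𝒜, #D = k)
    (hpair : (𝒜 : Set (Finset (Fin N))).Pairwise fun D E => #(D ∩ E) = k - 1) :
    ∃ C, (johnson N k).IsNClique #𝒜 C := by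
  refine ⟨𝒜.subtype (#· = k), isClique_johnson_iff.2 ?_, ?_⟩
  · exact hpair.mono (by rintro _ ⟨D, hD, rfl⟩; exact mem_subtype.1 hD)
  · rw [card_subtype, filter_true_of_mem hcard]

theorem exists_isNClique_johnson_sub_add_one (hk : 0 < k) (hkN : k ≤ N) :
    ∃ C, (johnson N k).IsNClique (N - k + 1) C := by
  obtain ⟨S, -, hS⟩ := exists_subset_card_eq (s := (univ : Finset (Fin N))) (n := k - 1)
    (by rw [card_univ, Fintype.card_fin]; omega)
  have hcard : #(Sᶜ.image (insert · S)) = N - k + 1 := by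
    rw [card_image_of_injOn (insert_inj_on' S), card_compl, Fintype.card_fin, hS]
    omega
  rw [← hcard]
  apply exists_isNClique_johnson_of_pairwise
  · simp only [mem_image, mem_compl, forall_exists_index, and_imp]
    rintro _ x hx rfl
    rw [card_insert_of_notMem hx, hS]
    omega
  · simp only [coe_image, coe_compl]
    rintro _ ⟨x, hx, rfl⟩ _ ⟨y, hy, rfl⟩ hxy
    rw [card_inter_insert_eq hx hy (fun h => hxy (h ▸ rfl)), hS]

theorem exists_isNClique_johnson_add_one (hkN : k < N) :
    ∃ C, (johnson N k).IsNClique (k + 1) C := by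
  obtain ⟨T, -, hT⟩ := exists_subset_card_eq (s := (univ : Finset (Fin N))) (n := k + 1)
    (by rw [card_univ, Fintype.card_fin]; omega)
  have hcard : #(T.powersetCard k) = k + 1 := by
    rw [card_powersetCard, hT, Nat.choose_succ_self_right]
  rw [← hcard]
  exact exists_isNClique_johnson_of_pairwise (fun D hD => (mem_powersetCard.1 hD).2)
    fun D hD E hE => card_inter_eq_of_mem_powersetCard hT hD hE

theorem card_le_of_isClique_johnson (hk : 0 < k) (hkN : k ≤ N)
    {C : Finset {S : Finset (Fin N) // #S = k}} (hC : (johnson N k).IsClique (C : Set _)) :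
    #C ≤ max (N - k + 1) (k + 1) := by
  obtain hC1 | hC1 := le_or_gt #C 1
  · exact le_max_of_le_right (by omega)
  obtain ⟨A, hA, B, hB, hAB⟩ := one_lt_card.1 hC1
  have hSAB : #(A.1 ∩ B.1) = k - 1 := (hC hA hB hAB).2
  rcases forall_inter_subset_or_forall_subset_union (𝒜 := Subtype.val '' (C : Set _))
    (by rintro _ ⟨D, -, rfl⟩; exact D.2) (isClique_johnson_iff.1 hC) ⟨A, hA, rfl⟩ ⟨B, hB, rfl⟩
    (Subtype.val_injective.ne hAB) with hS | hU
  · -- complements turn the members into `(N - k)`-subsets of the `(N - k + 1)`-set `(A ∩ B)ᶜ`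
    refine le_max_of_le_left (card_le_succ_of_injOn_powersetCard (U := (A.1 ∩ B.1)ᶜ)
      (f := fun D => D.1ᶜ) ?_ ?_ ?_)
    · rw [card_compl, Fintype.card_fin, hSAB]
      omega
    · exact fun D hD => ⟨compl_subset_compl.2 (hS _ ⟨D, hD, rfl⟩),
        by rw [card_compl, Fintype.card_fin, D.2]⟩
    · exact fun D _ E _ h => Subtype.ext (compl_injective h)
  · refine le_max_of_le_right (card_le_succ_of_injOn_powersetCard (U := A.1 ∪ B.1)
      (f := Subtype.val) ?_ (fun D hD => ⟨hU _ ⟨D, hD, rfl⟩, D.2⟩) Subtype.val_injective.injOn)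
    have := card_inter_add_card_union A.1 B.1
    rw [A.2, B.2, hSAB] at this
    omega

end Johnson

theorem omega_johnson_general (N k : ℕ) (hk : 0 < k) (hkN : k < N) :
    omega (johnson N k) = max (N - k + 1) (k + 1) := by
  refine IsGreatest.csSup_eq ⟨?_, ?_⟩
  · rcases max_choice (N - k + 1) (k + 1) with h | h <;> rw [h]
    · exact exists_isNClique_johnson_sub_add_one hk hkN.le
    · exact exists_isNClique_johnson_add_one hkN
  · rintro n ⟨C, hC⟩
    exact hC.card_eq ▸ card_le_of_isClique_johnson hk hkN.le hC.isClique

/-- For `N > 2` and `0 < k < N`, the clique number of the Johnson graph is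
`ω(J(N, k)) = max (N - k + 1) (k + 1)`. -/
theorem omega_johnson (N k : ℕ) (hN : 2 < N) (hk : 0 < k) (hkN : k < N) :
    omega (johnson N k) = max (N - k + 1) (k + 1) :=
  omega_johnson_general N k hk hkN
end

section
/- For k ≥ 2, all partial products in the telescoping Catalan recursion are integers, i.e., no rounding occurs at any step of the nested floor expression ⌊(2k/k)⌊(2k−1)/(k−1)⌊⋯⌊(k+2)/2⌋⋯⌋⌋⌋ = C_k, if and only if k + 1 is prime. -/
/-- The nested floor expression
`⌊(2k/k) ⌊((2k-1)/(k-1)) ⌊ ⋯ ⌊(k+2)/2⌋ ⋯ ⌋⌋⌋`: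
starting from `1`, apply `x ↦ ⌊(2k - i) · x / (k - i)⌋` for
`i = k-2, k-3, …, 0` (innermost first). -/
def nestedFloor (k : ℕ) : ℕ :=
  (List.range (k - 1)).foldr (fun i x => (2 * k - i) * x / (k - i)) 1

/-- reindexed partial values of the fold -/
def uAux (k : ℕ) : ℕ → ℕ
  | 0 => 1
  | m + 1 => (k + m + 2) * uAux k m / (m + 2)

lemma foldr_eq_uAux (k : ℕ) : ∀ n, n ≤ k - 1 →
    (List.range' (k - 1 - n) n).foldr (fun i x => (2 * k - i) * x / (k - i)) 1 = uAux k n := by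
  intro n
  induction n with
  | zero => intro _; simp [uAux]
  | succ n ih =>
    intro hn
    have h1 : k - 1 - (n + 1) + 1 = k - 1 - n := by omega
    rw [List.range'_succ, h1, List.foldr_cons, ih (by omega)]
    have h2 : 2 * k - (k - 1 - (n + 1)) = k + n + 2 := by omega
    have h3 : k - (k - 1 - (n + 1)) = n + 2 := by omega
    rw [h2, h3]
    rfl

lemma nestedFloor_eq_uAux (k : ℕ) : nestedFloor k = uAux k (k - 1) := by
  have := foldr_eq_uAux k (k - 1) le_rfl
  simpa [nestedFloor, List.range_eq_range'] using this

/-- ascending product identity -/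
lemma choose_mul_factorial (k : ℕ) : ∀ m, (k + m).choose m * m.factorial
    = ∏ j ∈ Finset.Icc 1 m, (k + j) := by
  intro m
  induction m with
  | zero => simp
  | succ m ih =>
    rw [Finset.prod_Icc_succ_top (by omega), ← ih]
    have h := Nat.add_one_mul_choose_eq (k + m) m
    have : (k + (m + 1)).choose (m + 1) * (m + 1) = (k + m + 1) * (k + m).choose m := by
      rw [show k + (m + 1) = k + m + 1 by ring]
      omega
    rw [Nat.factorial_succ]
    calc (k + (m + 1)).choose (m + 1) * ((m + 1) * m.factorial)
        = ((k + (m + 1)).choose (m + 1) * (m + 1)) * m.factorial := by ring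
      _ = (k + m + 1) * (k + m).choose m * m.factorial := by rw [this]
      _ = (k + m).choose m * m.factorial * (k + (m + 1)) := by ring

lemma Icc_one_split (m : ℕ) (hm : 1 ≤ m) (k : ℕ) :
    ∏ j ∈ Finset.Icc 1 m, (k + j) = (k + 1) * ∏ j ∈ Finset.Icc 2 m, (k + j) := by
  have h : Finset.Icc 1 m = insert 1 (Finset.Icc 2 m) := by
    ext x; simp [Finset.mem_Icc, Finset.mem_insert]; omega
  rw [h, Finset.prod_insert (by simp)]

lemma coprime_factorial_of_lt_minFac (n m : ℕ) (hn : 2 ≤ n) (hm : m < n.minFac) :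
    Nat.Coprime n m.factorial := by
  by_contra h
  have hgcd1 : Nat.gcd n m.factorial ≠ 1 := h
  set d := Nat.gcd n m.factorial with hd
  have hqp : d.minFac.Prime := Nat.minFac_prime hgcd1
  set q := d.minFac with hq
  have hqn : q ∣ n := (Nat.minFac_dvd d).trans (Nat.gcd_dvd_left _ _)
  have hqm : q ∣ m.factorial := (Nat.minFac_dvd d).trans (Nat.gcd_dvd_right _ _)
  have h1 : q ≤ m := (Nat.Prime.dvd_factorial hqp).mp hqm
  have h2 : n.minFac ≤ q := Nat.minFac_le_of_dvd hqp.two_le hqn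
  omega

/-- exact step: if the previous partial value is exact and `k+1` divides the next
binomial coefficient, the next partial value is exact. -/
lemma uAux_step (k m : ℕ) (hm : uAux k m * (k + 1) = (k + m + 1).choose (m + 1))
    (hd : (k + 1) ∣ (k + m + 2).choose (m + 2)) :
    uAux k (m + 1) * (k + 1) = (k + m + 2).choose (m + 2) := by
  obtain ⟨c, hc⟩ := hd
  have hkey := Nat.add_one_mul_choose_eq (k + m + 1) (m + 1)
  rw [show k + m + 1 + 1 = k + m + 2 by ring, show m + 1 + 1 = m + 2 by ring] at hkey
  have h2 : (k + m + 2) * uAux k m * (k + 1) = (m + 2) * c * (k + 1) := by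
    calc (k + m + 2) * uAux k m * (k + 1)
        = (k + m + 2) * (uAux k m * (k + 1)) := by ring
      _ = (k + m + 2) * (k + m + 1).choose (m + 1) := by rw [hm]
      _ = (k + m + 2).choose (m + 2) * (m + 2) := hkey
      _ = (k + 1) * c * (m + 2) := by rw [hc]
      _ = (m + 2) * c * (k + 1) := by ring
  have h3 := Nat.eq_of_mul_eq_mul_right (show 0 < k + 1 by omega) h2
  show (k + m + 2) * uAux k m / (m + 2) * (k + 1) = _
  rw [h3, Nat.mul_div_cancel_left c (by omega), hc, Nat.mul_comm]

/-- strict step: rounding never recovers. -/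
lemma uAux_step_lt (k m : ℕ) (hm : uAux k m * (k + 1) < (k + m + 1).choose (m + 1)) :
    uAux k (m + 1) * (k + 1) < (k + m + 2).choose (m + 2) := by
  have hkey := Nat.add_one_mul_choose_eq (k + m + 1) (m + 1)
  rw [show k + m + 1 + 1 = k + m + 2 by ring, show m + 1 + 1 = m + 2 by ring] at hkey
  have hdiv : uAux k (m + 1) * (m + 2) ≤ (k + m + 2) * uAux k m := by
    show (k + m + 2) * uAux k m / (m + 2) * (m + 2) ≤ _
    exact Nat.div_mul_le_self _ _
  have h1 : uAux k (m + 1) * (k + 1) * (m + 2) < (k + m + 2).choose (m + 2) * (m + 2) := by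
    calc uAux k (m + 1) * (k + 1) * (m + 2)
        = uAux k (m + 1) * (m + 2) * (k + 1) := by ring
      _ ≤ (k + m + 2) * uAux k m * (k + 1) := Nat.mul_le_mul_right _ hdiv
      _ = (k + m + 2) * (uAux k m * (k + 1)) := by ring
      _ < (k + m + 2) * (k + m + 1).choose (m + 1) :=
          mul_lt_mul_of_pos_left hm (by omega)
      _ = (k + m + 2).choose (m + 2) * (m + 2) := hkey
  exact Nat.lt_of_mul_lt_mul_right h1

/-- divisibility of `(k+m).choose m` by `k+1` when `m` is below the least prime
factor of `k+1`, with control of the quotient. -/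
lemma choose_div_structure (k m : ℕ) (hk : 2 ≤ k + 1) (hm1 : 1 ≤ m)
    (hm : m < (k + 1).minFac) :
    ∃ c, (k + m).choose m = (k + 1) * c ∧
      c * m.factorial = ∏ j ∈ Finset.Icc 2 m, (k + j) := by
  have h1 := choose_mul_factorial k m
  rw [Icc_one_split m hm1 k] at h1
  have hcop := coprime_factorial_of_lt_minFac (k + 1) m hk hm
  have hdvd : (k + 1) ∣ (k + m).choose m := by
    have : (k + 1) ∣ (k + m).choose m * m.factorial := ⟨_, h1⟩
    exact hcop.dvd_of_dvd_mul_right this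
  obtain ⟨c, hc⟩ := hdvd
  refine ⟨c, hc, ?_⟩
  rw [hc] at h1
  have : (k + 1) * (c * m.factorial) = (k + 1) * ∏ j ∈ Finset.Icc 2 m, (k + j) := by
    rw [← h1]; ring
  exact Nat.eq_of_mul_eq_mul_left (by omega) this

/-- prime case : every partial value is exact. -/
lemma prime_exact (k : ℕ) (hk : 1 ≤ k) (hp : Nat.Prime (k + 1)) :
    ∀ m, m ≤ k - 1 → uAux k m * (k + 1) = (k + m + 1).choose (m + 1) := by
  intro m
  induction m with
  | zero => intro _; simp [uAux, Nat.choose_one_right]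
  | succ m ih =>
    intro hm
    apply uAux_step k m (ih (by omega))
    have hd := Nat.Prime.dvd_choose_add hp (a := m + 2) (b := k)
      (by omega) (by omega) (by omega)
    rwa [show m + 2 + k = k + m + 2 by ring] at hd

/-- composite case: partial values are exact up to `minFac (k+1) - 2`. -/
lemma composite_exact (k : ℕ) (hk : 2 ≤ k) (hnp : ¬ Nat.Prime (k + 1)) :
    ∀ m, m ≤ (k + 1).minFac - 2 → uAux k m * (k + 1) = (k + m + 1).choose (m + 1) := by
  intro m
  induction m with
  | zero => intro _; simp [uAux, Nat.choose_one_right]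
  | succ m ih =>
    intro hm
    have hpf : ((k + 1).minFac).Prime := Nat.minFac_prime (by omega)
    apply uAux_step k m (ih (by omega))
    obtain ⟨c, hc, -⟩ := choose_div_structure k (m + 2) (by omega) (by omega)
      (by have := hpf.two_le; omega)
    rw [show k + (m + 2) = k + m + 2 by ring] at hc
    exact ⟨c, hc⟩

lemma minFac_le_k (k : ℕ) (hk : 2 ≤ k) (hnp : ¬ Nat.Prime (k + 1)) :
    (k + 1).minFac ≤ k := by
  have hdvd := Nat.minFac_dvd (k + 1)
  have hle := Nat.le_of_dvd (by omega) hdvd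
  have hne : (k + 1).minFac ≠ k + 1 := by
    intro h
    exact hnp ((Nat.prime_def_minFac).mpr ⟨by omega, h⟩)
  omega

/-- composite case: strict inequality at step `minFac - 1` and beyond. -/
lemma composite_fail (k : ℕ) (hk : 2 ≤ k) (hnp : ¬ Nat.Prime (k + 1)) :
    uAux k ((k + 1).minFac - 1) * (k + 1)
      < (k + ((k + 1).minFac - 1) + 1).choose (((k + 1).minFac - 1) + 1) := by
  set p := (k + 1).minFac with hpdef
  have hpf : p.Prime := Nat.minFac_prime (by omega)
  have hp2 : 2 ≤ p := hpf.two_le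
  have hpd : p ∣ k + 1 := Nat.minFac_dvd _
  have hpk : p ≤ k := minFac_le_k k hk hnp
  -- exactness at m = p - 2
  have hc0 := composite_exact k hk hnp (p - 2) le_rfl
  set c := uAux k (p - 2) with hcdef
  -- structure of the quotient
  obtain ⟨c', hc', hprod⟩ := choose_div_structure k (p - 1) (by omega) (by omega) (by omega)
  have hcc : c = c' := by
    have h1 : c * (k + 1) = (k + (p - 1)).choose (p - 1) := by
      rw [hc0]; congr 1 <;> omega
    rw [hc'] at h1
    have : c * (k + 1) = c' * (k + 1) := by rw [h1]; ring
    exact Nat.eq_of_mul_eq_mul_right (by omega) this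
  subst hcc
  -- p does not divide (k + p)
  have hpkp : ¬ p ∣ (k + p) := by
    intro h
    have h2 : p ∣ (k + p) - (k + 1) := Nat.dvd_sub h hpd
    have h3 : (k + p) - (k + 1) = p - 1 := by omega
    rw [h3] at h2
    have := Nat.le_of_dvd (by omega) h2
    omega
  -- p does not divide c
  have hpc : ¬ p ∣ c := by
    intro h
    have h2 : p ∣ ∏ j ∈ Finset.Icc 2 (p - 1), (k + j) := by
      rw [← hprod]; exact h.mul_right _
    obtain ⟨a, ha, hpa⟩ := (hpf.prime.dvd_finset_prod_iff _).mp h2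
    simp only [Finset.mem_Icc] at ha
    have h4 : p ∣ (k + a) - (k + 1) := Nat.dvd_sub hpa hpd
    have h5 : (k + a) - (k + 1) = a - 1 := by omega
    rw [h5] at h4
    have := Nat.le_of_dvd (by omega) h4
    omega
  have hpN : ¬ p ∣ (k + p) * c := by
    intro h
    rcases (Nat.Prime.dvd_mul hpf).mp h with h | h
    · exact hpkp h
    · exact hpc h
  -- the value at step p - 1
  have hval : uAux k (p - 1) = (k + p) * c / p := by
    have h1 : p - 1 = (p - 2) + 1 := by omega
    rw [h1]
    show (k + (p - 2) + 2) * c / ((p - 2) + 2) = _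
    rw [show k + (p - 2) + 2 = k + p by omega, show (p - 2) + 2 = p by omega]
  have hlt : uAux k (p - 1) * p < (k + p) * c := by
    rw [hval]
    refine lt_of_le_of_ne (Nat.div_mul_le_self _ _) ?_
    intro h
    exact hpN (dvd_iff_exists_eq_mul_left.mpr ⟨_, h.symm⟩)
  -- key binomial identity
  have hkey := Nat.add_one_mul_choose_eq (k + p - 1) (p - 1)
  rw [show k + p - 1 + 1 = k + p by omega, show p - 1 + 1 = p by omega] at hkey
  have hgoal : uAux k (p - 1) * (k + 1) * p < (k + p).choose p * p := by
    calc uAux k (p - 1) * (k + 1) * p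
        = (uAux k (p - 1) * p) * (k + 1) := by ring
      _ < ((k + p) * c) * (k + 1) := mul_lt_mul_of_pos_right hlt (by omega)
      _ = (k + p) * ((k + 1) * c) := by ring
      _ = (k + p) * (k + (p - 1)).choose (p - 1) := by rw [← hc']
      _ = (k + p) * (k + p - 1).choose (p - 1) := by
            congr 2; omega
      _ = (k + p).choose p * p := hkey
  have := Nat.lt_of_mul_lt_mul_right hgoal
  have heq : (k + ((p : ℕ) - 1) + 1).choose ((p - 1) + 1) = (k + p).choose p := by
    congr 1 <;> omega
  rw [heq]
  exact this

/-- strict inequality propagates to the end. -/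
lemma composite_final (k : ℕ) (hk : 2 ≤ k) (hnp : ¬ Nat.Prime (k + 1)) :
    uAux k (k - 1) * (k + 1) < (2 * k).choose k := by
  set p := (k + 1).minFac with hpdef
  have hpf : p.Prime := Nat.minFac_prime (by omega)
  have hp2 : 2 ≤ p := hpf.two_le
  have hpk : p ≤ k := minFac_le_k k hk hnp
  have main : ∀ m, p - 1 ≤ m → uAux k m * (k + 1) < (k + m + 1).choose (m + 1) := by
    intro m hm
    induction m with
    | zero => omega
    | succ m ih =>
      rcases Nat.lt_or_ge (p - 1) (m + 1) with h | h
      · exact uAux_step_lt k m (ih (by omega))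
      · have : m + 1 = p - 1 := by omega
        rw [this]
        exact composite_fail k hk hnp
  have h := main (k - 1) (by omega)
  rwa [show k + (k - 1) + 1 = 2 * k by omega, show (k - 1) + 1 = k by omega] at h

/-- For `k ≥ 2`, the nested floor expression equals the `k`-th Catalan number
(i.e. no floor ever rounds down) if and only if `k + 1` is prime. -/
theorem nestedFloor_eq_catalan_iff (k : ℕ) (hk : 2 ≤ k) :
    nestedFloor k = catalan k ↔ Nat.Prime (k + 1) := by
  have hcb : (k + 1) * catalan k = (2 * k).choose k := by
    rw [succ_mul_catalan_eq_centralBinom]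
    rfl
  constructor
  · intro h
    by_contra hnp
    have hlt := composite_final k hk hnp
    rw [← nestedFloor_eq_uAux, h, Nat.mul_comm] at hlt
    omega
  · intro hp
    have h := prime_exact k (by omega) hp (k - 1) le_rfl
    rw [show k + (k - 1) + 1 = 2 * k by omega, show (k - 1) + 1 = k by omega] at h
    rw [nestedFloor_eq_uAux]
    have : uAux k (k - 1) * (k + 1) = catalan k * (k + 1) := by
      rw [h, ← hcb]; ring
    exact Nat.eq_of_mul_eq_mul_right (by omega) this
end

section
/- Define the graph JK(N,k) with vertex set P_k([N]) × {0,1}, where (S,i) and (T,j) are adjacent iff (i = j and |S ∩ T| = k−1) or (i ≠ j and S ∩ T = ∅). Then the map from the vertices of J(2k,k) to the vertices of JK(2k−1,k−1) given by S ↦ (S\{2k}, 0) if 2k ∈ S and S ↦ ([2k−1]\S, 1) if 2k ∉ S, is a graph isomorphism from J(2k,k) to JK(2k−1,k−1). -/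
/-- The Johnson graph `J(N, k)`, with vertices the `k`-element subsets of
`[N] = {0, …, N-1} ⊆ ℕ`. -/
def johnsonN (N k : ℕ) : SimpleGraph {S : Finset ℕ // S ⊆ Finset.range N ∧ S.card = k} where
  Adj S T := S ≠ T ∧ (S.1 ∩ T.1).card = k - 1
  symm := by
    constructor
    intro S T h
    exact ⟨h.1.symm, by rw [Finset.inter_comm]; exact h.2⟩
  loopless := by
    constructor
    intro S h
    exact h.1 rfl

/-- The graph `JK(N, k)`: two copies of the `k`-subsets of `[N]`;
`(S, i)` and `(T, j)` are adjacent iff `i = j` and `|S ∩ T| = k - 1`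
(with `S ≠ T`), or `i ≠ j` and `S ∩ T = ∅`. -/
def JK (N k : ℕ) :
    SimpleGraph ({S : Finset ℕ // S ⊆ Finset.range N ∧ S.card = k} × Bool) where
  Adj P Q := (P.2 = Q.2 ∧ P.1 ≠ Q.1 ∧ (P.1.1 ∩ Q.1.1).card = k - 1) ∨
    (P.2 ≠ Q.2 ∧ P.1.1 ∩ Q.1.1 = ∅)
  symm := by
    constructor
    intro P Q h
    rcases h with ⟨h1, h2, h3⟩ | ⟨h1, h2⟩
    · exact Or.inl ⟨h1.symm, h2.symm, by rw [Finset.inter_comm]; exact h3⟩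
    · exact Or.inr ⟨h1.symm, by rw [Finset.inter_comm]; exact h2⟩
  loopless := by
    constructor
    intro P h
    rcases h with ⟨_, h2, _⟩ | ⟨h1, _⟩
    · exact h2 rfl
    · exact h1 rfl

/-!
Vertices containing the top element `2k - 1` lose it and land on side `false`; the others are
complemented inside `[2k - 1]` and land on side `true`. In each of the four cases both adjacency
relations are conditions on `|S ∩ T|`: erasing a common element lowers it by one; complementing two
`k`-sets inside a `(2k - 1)`-set turns it into `|S ∩ T| - 1`; and if only `S` contains the top
element, `|S ∩ T| = k - 1` says that `S` minus the top lies in `T`, i.e. misses the complement of `T`.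
-/

open Finset

namespace Finset

variable {α : Type*} [DecidableEq α] {S T U : Finset α} {a : α} {k : ℕ}

theorem ne_and_card_inter_eq_sub_one_iff (hS : #S = k) (hT : #T = k) :
    S ≠ T ∧ #(S ∩ T) = k - 1 ↔ #(S ∩ T) + 1 = k := by
  have hle : #(S ∩ T) ≤ k := hS ▸ card_le_card inter_subset_left
  have heq : #(S ∩ T) = k ↔ S = T := by
    refine ⟨fun h ↦ ?_, by rintro rfl; simpa⟩
    have hST : S ∩ T = S := eq_of_subset_of_card_le inter_subset_left (by omega)
    exact eq_of_subset_of_card_le (inter_eq_left.1 hST) (by omega)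
  rw [Ne, ← heq]
  omega

theorem card_erase_inter_erase_add_one (hS : a ∈ S) (hT : a ∈ T) :
    #(S.erase a ∩ T.erase a) + 1 = #(S ∩ T) := by
  rw [erase_inter, inter_erase, erase_idem, card_erase_add_one (mem_inter.2 ⟨hS, hT⟩)]

theorem card_sdiff_inter_sdiff_add_card_add_card (hS : S ⊆ U) (hT : T ⊆ U) :
    #(U \ S ∩ (U \ T)) + #S + #T = #U + #(S ∩ T) := by
  have hST : S ∪ T ⊆ U := union_subset hS hT
  rw [← sdiff_union_distrib, card_sdiff_of_subset hST]
  have := card_le_card hST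
  have := card_union_add_card_inter S T
  omega

theorem disjoint_erase_sdiff_iff (ha : a ∈ S) (haT : a ∉ T) (hSU : S.erase a ⊆ U) (hTU : T ⊆ U)
    (hST : #S = #T) : Disjoint (S.erase a) (U \ T) ↔ #(S ∩ T) + 1 = #T := by
  have hinter : S ∩ T = S.erase a ∩ T := by
    rw [erase_inter, erase_eq_of_notMem fun h ↦ haT (mem_inter.1 h).2]
  have hcard := card_erase_add_one ha
  rw [disjoint_sdiff_iff_le hSU hTU, hinter, ← hST, ← hcard, add_left_inj, ← inter_eq_left]
  exact ⟨congrArg card, eq_of_subset_of_card_le inter_subset_left ∘ ge_of_eq⟩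

end Finset

theorem subset_range_pred_of_notMem {S : Finset ℕ} {N : ℕ} (hS : S ⊆ range N) (h : N - 1 ∉ S) :
    S ⊆ range (N - 1) := fun x hx ↦ by
  have := mem_range.1 (hS hx)
  have : x ≠ N - 1 := ne_of_mem_of_not_mem hx h
  exact mem_range.2 (by omega)

abbrev KSubset (N k : ℕ) := {S : Finset ℕ // S ⊆ range N ∧ #S = k}

theorem johnsonN_adj_iff {N k : ℕ} {S T : KSubset N k} :
    (johnsonN N k).Adj S T ↔ #(S.1 ∩ T.1) + 1 = k := by
  rw [← ne_and_card_inter_eq_sub_one_iff S.2.2 T.2.2, Ne, ← Subtype.ext_iff]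
  rfl

theorem JK_adj_iff {N k : ℕ} {P Q : KSubset N k × Bool} :
    (JK N k).Adj P Q ↔
      P.2 = Q.2 ∧ #(P.1.1 ∩ Q.1.1) + 1 = k ∨ P.2 ≠ Q.2 ∧ Disjoint P.1.1 Q.1.1 := by
  rw [← ne_and_card_inter_eq_sub_one_iff P.1.2.2 Q.1.2.2, Ne, ← Subtype.ext_iff,
    disjoint_iff_inter_eq_empty]
  rfl

namespace JohnsonJK

variable {k : ℕ}

def toJK (k : ℕ) (S : KSubset (2 * k) k) : KSubset (2 * k - 1) (k - 1) × Bool :=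
  if h : 2 * k - 1 ∈ S.1 then
    (⟨S.1.erase (2 * k - 1),
      subset_range_pred_of_notMem ((erase_subset _ _).trans S.2.1) (notMem_erase _ _),
      by rw [card_erase_of_mem h, S.2.2]⟩, false)
  else
    (⟨range (2 * k - 1) \ S.1, sdiff_subset,
      by rw [card_sdiff_of_subset (subset_range_pred_of_notMem S.2.1 h), card_range, S.2.2]; omega⟩,
      true)

def ofJK (hk : 0 < k) : KSubset (2 * k - 1) (k - 1) × Bool → KSubset (2 * k) k
  | (T, false) =>
    ⟨insert (2 * k - 1) T.1,
      insert_subset (mem_range.2 (by omega)) (T.2.1.trans (range_subset_range.2 (by omega))),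
      by rw [card_insert_of_notMem fun h ↦ by simpa using T.2.1 h, T.2.2]; omega⟩
  | (T, true) =>
    ⟨range (2 * k - 1) \ T.1, sdiff_subset.trans (range_subset_range.2 (by omega)),
      by rw [card_sdiff_of_subset T.2.1, card_range, T.2.2]; omega⟩

theorem toJK_of_mem {S : KSubset (2 * k) k} (h : 2 * k - 1 ∈ S.1) :
    (toJK k S).1.1 = S.1.erase (2 * k - 1) ∧ (toJK k S).2 = false := by
  simp [toJK, h]

theorem toJK_of_notMem {S : KSubset (2 * k) k} (h : 2 * k - 1 ∉ S.1) :
    (toJK k S).1.1 = range (2 * k - 1) \ S.1 ∧ (toJK k S).2 = true := by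
  simp [toJK, h]

theorem ofJK_toJK (hk : 0 < k) (S : KSubset (2 * k) k) : ofJK hk (toJK k S) = S := by
  by_cases h : 2 * k - 1 ∈ S.1
  · simp only [toJK, dif_pos h, ofJK]
    exact Subtype.ext (insert_erase h)
  · simp only [toJK, dif_neg h, ofJK]
    exact Subtype.ext (Finset.sdiff_sdiff_eq_self (subset_range_pred_of_notMem S.2.1 h))

theorem toJK_ofJK (hk : 0 < k) (P : KSubset (2 * k - 1) (k - 1) × Bool) :
    toJK k (ofJK hk P) = P := by
  obtain ⟨T, _ | _⟩ := P
  · have h : 2 * k - 1 ∉ T.1 := fun h ↦ by simpa using T.2.1 h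
    obtain ⟨h₁, h₂⟩ := toJK_of_mem (S := ofJK hk (T, false)) (mem_insert_self _ _)
    exact Prod.ext (Subtype.ext (h₁.trans (erase_insert h))) h₂
  · obtain ⟨h₁, h₂⟩ := toJK_of_notMem (S := ofJK hk (T, true)) (by simp [ofJK])
    exact Prod.ext (Subtype.ext (h₁.trans (Finset.sdiff_sdiff_eq_self T.2.1))) h₂

theorem toJK_adj_toJK_of_mem_of_notMem {S T : KSubset (2 * k) k} (hS : 2 * k - 1 ∈ S.1)
    (hT : 2 * k - 1 ∉ T.1) :
    (JK (2 * k - 1) (k - 1)).Adj (toJK k S) (toJK k T) ↔ (johnsonN (2 * k) k).Adj S T := by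
  obtain ⟨hS₁, hS₂⟩ := toJK_of_mem hS
  obtain ⟨hT₁, hT₂⟩ := toJK_of_notMem hT
  have hSrange : S.1.erase (2 * k - 1) ⊆ range (2 * k - 1) := hS₁ ▸ (toJK k S).1.2.1
  rw [JK_adj_iff, johnsonN_adj_iff, hS₁, hS₂, hT₁, hT₂, disjoint_erase_sdiff_iff hS hT hSrange
    (subset_range_pred_of_notMem T.2.1 hT) (S.2.2.trans T.2.2.symm), T.2.2]
  simp

theorem toJK_adj_toJK_iff (S T : KSubset (2 * k) k) :
    (JK (2 * k - 1) (k - 1)).Adj (toJK k S) (toJK k T) ↔ (johnsonN (2 * k) k).Adj S T := by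
  by_cases hS : 2 * k - 1 ∈ S.1 <;> by_cases hT : 2 * k - 1 ∈ T.1
  · obtain ⟨hS₁, hS₂⟩ := toJK_of_mem hS
    obtain ⟨hT₁, hT₂⟩ := toJK_of_mem hT
    rw [JK_adj_iff, johnsonN_adj_iff, hS₁, hS₂, hT₁, hT₂, ← card_erase_inter_erase_add_one hS hT]
    simp only [true_and, ne_eq, not_true_eq_false, false_and, or_false]
    omega
  · exact toJK_adj_toJK_of_mem_of_notMem hS hT
  · rw [SimpleGraph.adj_comm, (johnsonN _ _).adj_comm]
    exact toJK_adj_toJK_of_mem_of_notMem hT hS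
  · obtain ⟨hS₁, hS₂⟩ := toJK_of_notMem hS
    obtain ⟨hT₁, hT₂⟩ := toJK_of_notMem hT
    have hcard := card_sdiff_inter_sdiff_add_card_add_card (subset_range_pred_of_notMem S.2.1 hS)
      (subset_range_pred_of_notMem T.2.1 hT)
    rw [card_range, S.2.2, T.2.2] at hcard
    rw [JK_adj_iff, johnsonN_adj_iff, hS₁, hS₂, hT₁, hT₂]
    simp only [true_and, ne_eq, not_true_eq_false, false_and, or_false]
    omega

def johnsonIsoJK (hk : 0 < k) : johnsonN (2 * k) k ≃g JK (2 * k - 1) (k - 1) :=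
  ⟨⟨toJK k, ofJK hk, ofJK_toJK hk, toJK_ofJK hk⟩, toJK_adj_toJK_iff _ _⟩

end JohnsonJK

/-- For `k ≥ 2`, the map sending a `k`-subset `S` of `[2k]` to
`(S \ {2k}, 0)` if `2k ∈ S` and to `([2k-1] \ S, 1)` otherwise (the top
element of `[2k] = {0, …, 2k-1}` being `2k - 1`) is a graph isomorphism
`J(2k, k) ≃ JK(2k-1, k-1)`. -/
theorem johnson_iso_JK (k : ℕ) (hk : 2 ≤ k) :
    ∃ f : johnsonN (2 * k) k ≃g JK (2 * k - 1) (k - 1),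
      ∀ S : {S : Finset ℕ // S ⊆ Finset.range (2 * k) ∧ S.card = k},
        if 2 * k - 1 ∈ S.1 then
          ((f S).1.1 = S.1.erase (2 * k - 1) ∧ (f S).2 = false)
        else
          ((f S).1.1 = Finset.range (2 * k - 1) \ S.1 ∧ (f S).2 = true) := by
  refine ⟨JohnsonJK.johnsonIsoJK (by omega), fun S ↦ ?_⟩
  split_ifs with h
  · exact JohnsonJK.toJK_of_mem h
  · exact JohnsonJK.toJK_of_notMem h
end
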